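/- For an X-program given by a k-by-n binary matrix P with angles θ_p for each row p, the probability that the output equals x ∈ F_2^n, defined as |⟨x| exp(Σ_p iθ_p ⊗_{j: p_j=1} X_j) |0^n⟩|², equals |Σ_{a ∈ F_2^k : a·P = x} ∏_{p : a_p = 0} cos θ_p · ∏_{p : a_p = 1} i sin θ_p|². -/

import Mathlib

attribute [local instance] Matrix.linftyOpNormedRing Matrix.linftyOpNormedAlgebra

/-- The tensor product of Pauli `X` operators over the qubits `j` with `v j = 1`, as a
matrix acting on `ℂ^{F₂ⁿ}` in the computational basis: it maps `|b⟩` to `|b + v⟩`. -/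
def pauliXs (n : ℕ) (v : Fin n → ZMod 2) :
    Matrix (Fin n → ZMod 2) (Fin n → ZMod 2) ℂ :=
  fun x y => if y = x + v then 1 else 0

/-!
Each Pauli word `X_p` squares to the identity, so `exp (iθ X_p) = cos θ + i sin θ X_p`.
Moreover `p ↦ X_p` is a representation of `F₂ⁿ`, so it extends to an algebra map from the
commutative group algebra `ℂ[F₂ⁿ]`; the exponential of the commuting sum is the image of the
product of the `k` factors `cos θ_p · [0] + i sin θ_p · [p]`, which expands in `ℂ[F₂ⁿ]` into a
sum over `a ∈ F₂ᵏ` of the path weights times `[a·P]`. The `(x, 0)` entry of `X_{a·P}` is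
`1` exactly when `a·P = x`.
-/

open NormedSpace Finset Complex

theorem exp_smul_of_mul_self_eq_one {𝔸 : Type*} [Ring 𝔸] [Algebra ℂ 𝔸] [TopologicalSpace 𝔸]
    [IsTopologicalRing 𝔸] [ContinuousSMul ℂ 𝔸] [T2Space 𝔸] {a : 𝔸} (ha : a * a = 1) (z : ℂ) :
    exp (z • a) = cosh z • (1 : 𝔸) + sinh z • a := by
  have hpow : ∀ m, a ^ (2 * m) = 1 := fun m => by rw [pow_mul, sq, ha, one_pow]
  rw [exp_eq_tsum ℂ]
  refine (HasSum.even_add_odd ?_ ?_).tsum_eq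
  · convert (hasSum_cosh z).smul_const (1 : 𝔸) using 2 with m
    rw [smul_pow, hpow, smul_smul, div_eq_inv_mul]
  · convert (hasSum_sinh z).smul_const a using 2 with m
    rw [smul_pow, pow_succ a, hpow, one_mul, smul_smul, div_eq_inv_mul]

theorem exp_map_sum_eq_map_prod {𝔸 A ι : Type*} [NormedRing 𝔸] [NormedAlgebra ℚ 𝔸]
    [CompleteSpace 𝔸] [CommSemiring A] (φ : A →+* 𝔸) (s : Finset ι) (x y : ι → A)
    (h : ∀ i ∈ s, exp (φ (x i)) = φ (y i)) :
    exp (φ (∑ i ∈ s, x i)) = φ (∏ i ∈ s, y i) := by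
  classical
  induction s using Finset.induction_on with
  | empty => simp
  | insert j s hj ih =>
    rw [sum_insert hj, prod_insert hj, map_add, exp_add_of_commute ((Commute.all _ _).map φ),
      h j (mem_insert_self j s), ih fun i hi => h i (mem_insert_of_mem hi), map_mul]

theorem ZMod.sum_univ_two {M : Type*} [AddCommMonoid M] (f : ZMod 2 → M) :
    ∑ b, f b = f 0 + f 1 :=
  Fin.sum_univ_two f

section PauliX

variable {n : ℕ}

theorem pauliXs_add (u v : Fin n → ZMod 2) :
    pauliXs n (u + v) = pauliXs n u * pauliXs n v := by
  ext x y
  simp only [pauliXs, Matrix.mul_apply, ite_mul, one_mul, zero_mul]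
  rw [Finset.sum_ite_eq']
  simp [add_assoc]

theorem pauliXs_zero : pauliXs n 0 = 1 := by
  ext x y
  simp [pauliXs, Matrix.one_apply, eq_comm]

theorem pauliXs_mul_self (v : Fin n → ZMod 2) : pauliXs n v * pauliXs n v = 1 := by
  rw [← pauliXs_add, ← pauliXs_zero]
  exact congrArg _ (funext fun j => CharTwo.add_self_eq_zero (v j))

theorem pauliXs_apply_zero (v x : Fin n → ZMod 2) :
    pauliXs n v x 0 = if v = x then 1 else 0 := by
  simp only [pauliXs, eq_comm (a := (0 : Fin n → ZMod 2)), add_eq_zero_iff_eq_neg,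
    ZModModule.neg_eq_self, eq_comm (a := x)]

variable (n) in
def pauliXsHom :
    Multiplicative (Fin n → ZMod 2) →* Matrix (Fin n → ZMod 2) (Fin n → ZMod 2) ℂ where
  toFun v := pauliXs n v.toAdd
  map_one' := pauliXs_zero
  map_mul' u v := pauliXs_add u.toAdd v.toAdd

variable (n) in
noncomputable def pauliXsAlgHom :
    AddMonoidAlgebra ℂ (Fin n → ZMod 2) →ₐ[ℂ] Matrix (Fin n → ZMod 2) (Fin n → ZMod 2) ℂ :=
  AddMonoidAlgebra.lift ℂ _ _ (pauliXsHom n)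

@[simp]
theorem pauliXsAlgHom_single (v : Fin n → ZMod 2) (c : ℂ) :
    pauliXsAlgHom n (AddMonoidAlgebra.single v c) = c • pauliXs n v := by
  simp [pauliXsAlgHom, pauliXsHom]

theorem exp_I_mul_smul_pauliXs (θ : ℝ) (v : Fin n → ZMod 2) :
    exp ((I * θ) • pauliXs n v) = (Real.cos θ : ℂ) • 1 + (I * Real.sin θ) • pauliXs n v := by
  rw [exp_smul_of_mul_self_eq_one (pauliXs_mul_self v), mul_comm, cosh_mul_I, sinh_mul_I,
    ofReal_cos, ofReal_sin, mul_comm]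

theorem exp_sum_I_mul_smul_pauliXs {ι : Type*} [Fintype ι] [DecidableEq ι]
    (θ : ι → ℝ) (v : ι → Fin n → ZMod 2) :
    exp (∑ i, (I * θ i) • pauliXs n (v i)) =
      ∑ a : ι → ZMod 2,
        (∏ i, if a i = 0 then (Real.cos (θ i) : ℂ) else I * Real.sin (θ i)) •
          pauliXs n (∑ i, a i • v i) := by
  set c : ι → ZMod 2 → ℂ := fun i b =>
    if b = 0 then (Real.cos (θ i) : ℂ) else I * Real.sin (θ i)
  have hterm : ∀ i, exp (pauliXsAlgHom n (AddMonoidAlgebra.single (v i) (I * θ i))) =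
      pauliXsAlgHom n (∑ b : ZMod 2, AddMonoidAlgebra.single (b • v i) (c i b)) := by
    intro i
    simp [ZMod.sum_univ_two, exp_I_mul_smul_pauliXs, c, pauliXs_zero]
  have hprod := exp_map_sum_eq_map_prod (pauliXsAlgHom n).toRingHom univ _ _ fun i _ => hterm i
  simp only [AlgHom.toRingHom_eq_coe, RingHom.coe_coe, map_sum, pauliXsAlgHom_single] at hprod
  refine hprod.trans ?_
  rw [Fintype.prod_sum, map_sum]
  refine sum_congr rfl fun a _ => ?_
  rw [AddMonoidAlgebra.prod_single, pauliXsAlgHom_single]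

end PauliX

theorem xprog_sum_over_paths {k n : ℕ} (P : Matrix (Fin k) (Fin n) (ZMod 2))
    (θ : Fin k → ℝ) (x : Fin n → ZMod 2) :
    Norm.norm
        ((NormedSpace.exp
            (∑ i : Fin k, (Complex.I * (θ i : ℂ)) • pauliXs n (P i))) x 0) ^ 2 =
      Norm.norm (∑ a ∈ Finset.univ.filter
          (fun a : Fin k → ZMod 2 => Matrix.vecMul a P = x),
        (∏ i ∈ Finset.univ.filter (fun i : Fin k => a i = 0), (Real.cos (θ i) : ℂ)) *
          ∏ i ∈ Finset.univ.filter (fun i : Fin k => a i = 1),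
            Complex.I * (Real.sin (θ i) : ℂ)) ^ 2 := by
  have hne : ∀ b : ZMod 2, b ≠ 0 ↔ b = 1 := by decide
  rw [exp_sum_I_mul_smul_pauliXs θ P, Matrix.sum_apply, sum_filter]
  congr 2
  refine sum_congr rfl fun a _ => ?_
  simp only [Matrix.smul_apply, pauliXs_apply_zero, ← Matrix.vecMul_eq_sum, smul_eq_mul,
    mul_ite, mul_one, mul_zero, prod_ite, hne]
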